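/- Let K be Stonian with Bade-complete Boolean algebra of idempotents B acting on a real Banach C(K)-module X, and let x ∈ X, x' ∈ X'. Define μ(a) = x'(m(a)x) for a ∈ C(K). Then there exists an idempotent e₊ ∈ B such that the functionals a ↦ x'(m(a e₊)x) and a ↦ −x'(m(a(1−e₊))x) are both positive linear functionals on C(K), realizing the Jordan decomposition μ⁺ = μ_{e₊x,x'} and μ⁻ = −μ_{(1−e₊)x,x'}. -/

import Mathlib

/-!
Write `μ a = x' (m a x)` and `λ U = μ 1_U` for clopen `U ⊆ K`; `λ` is finitely additive on the
Boolean algebra of clopen sets. As `K` is extremally disconnected, every family of clopen sets has a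
least upper bound there, the closure of its union, and Bade completeness says that `λ` is continuous
along increasing nets converging to it. This is what the Hahn decomposition argument needs: the
supremum `P` of all clopen sets on which `λ` is positive is again positive, and a clopen subset of
`Pᶜ` of positive mass would, after removing a maximal (Zorn) subset of nonpositive mass, leave a
positive set disjoint from `P`. Locally constant functions are dense in `C(K)` (Stone–Weierstrass),
so these sign conditions on clopen sets make `a ↦ μ (a 1_P)` and `a ↦ -μ (a 1_Pᶜ)` positive, and
then `μ (a 1_P)` is the largest value of `μ` on `[0, a]`.
-/

open Filter Topology

/-- The Boolean algebra of idempotents of `C(K)` is Bade complete on `X`. -/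
def BadeComplete {K X : Type*} [TopologicalSpace K] [CompactSpace K] [T2Space K]
    [NormedAddCommGroup X] [NormedSpace ℝ X] [CompleteSpace X]
    (m : C(K, ℝ) →ₐ[ℝ] (X →L[ℝ] X)) : Prop :=
  ∀ S : Set C(K, ℝ), (∀ e ∈ S, e * e = e) → S.Nonempty → DirectedOn (· ≤ ·) S →
    ∀ E : C(K, ℝ), E * E = E → IsLUB S E →
      ∀ x : X, Filter.Tendsto (fun e : S => m (e : C(K, ℝ)) x) Filter.atTop (nhds (m E x))

open TopologicalSpace Set

lemma DirectedOn.mem_closure_image_of_tendsto {α β : Type*} [Preorder α] [TopologicalSpace β]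
    {D : Set α} (hne : D.Nonempty) (hdir : DirectedOn (· ≤ ·) D) {g : α → β} {y : β}
    (h : Tendsto (fun d : D => g d) atTop (𝓝 y)) : y ∈ closure (g '' D) := by
  have := hne.to_subtype
  have := hdir.isDirectedOrder
  exact mem_closure_of_tendsto h (Eventually.of_forall fun d => mem_image_of_mem g d.2)

lemma IsLUB.inf_left {α : Type*} [GeneralizedHeytingAlgebra α] {D : Set α} {s : α}
    (hs : IsLUB D s) (a : α) : IsLUB ((a ⊓ ·) '' D) (a ⊓ s) := by
  refine ⟨?_, fun u hu => ?_⟩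
  · rintro _ ⟨d, hd, rfl⟩
    exact inf_le_inf_left a (hs.1 hd)
  · exact le_himp_iff'.1 (hs.2 fun d hd => le_himp_iff'.2 (hu ⟨d, hd, rfl⟩))

section HahnDecomposition

variable {B : Type*} [BooleanAlgebra B] {f : B → ℝ}

def IsAdditive (f : B → ℝ) : Prop := ∀ a b, Disjoint a b → f (a ⊔ b) = f a + f b

def IsOrderContinuous (f : B → ℝ) : Prop :=
  ∀ (D : Set B) (s : B), D.Nonempty → DirectedOn (· ≤ ·) D → IsLUB D s →
    Tendsto (fun d : D => f d) atTop (𝓝 (f s))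

def IsPositiveFor (f : B → ℝ) (p : B) : Prop := ∀ q ≤ p, 0 ≤ f q

lemma IsAdditive.map_bot (hadd : IsAdditive f) : f ⊥ = 0 := by
  have := hadd ⊥ ⊥ disjoint_bot_left
  rw [bot_sup_eq] at this
  linarith

lemma IsAdditive.map_eq_map_inf_add_map_sdiff (hadd : IsAdditive f) (a b : B) :
    f a = f (a ⊓ b) + f (a \ b) := by
  rw [← hadd _ _ disjoint_inf_sdiff, sup_inf_sdiff]

lemma IsPositiveFor.sup (hadd : IsAdditive f) {p q : B}
    (hp : IsPositiveFor f p) (hq : IsPositiveFor f q) : IsPositiveFor f (p ⊔ q) := fun r hr => by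
  rw [hadd.map_eq_map_inf_add_map_sdiff r p]
  exact add_nonneg (hp _ inf_le_right) (hq _ (sdiff_le_iff.2 hr))

lemma IsPositiveFor.of_isLUB (hcont : IsOrderContinuous f)
    {D : Set B} (hne : D.Nonempty) (hdir : DirectedOn (· ≤ ·) D)
    (hD : ∀ d ∈ D, IsPositiveFor f d) {s : B} (hs : IsLUB D s) : IsPositiveFor f s := by
  intro q hq
  have hlub : IsLUB ((q ⊓ ·) '' D) q := by simpa [inf_eq_left.2 hq] using hs.inf_left q
  have hdir' : DirectedOn (· ≤ ·) ((q ⊓ ·) '' D) := hdir.mono_comp fun _ _ h => inf_le_inf_left q h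
  have hmem := DirectedOn.mem_closure_image_of_tendsto (hne.image _) hdir'
    (hcont _ _ (hne.image _) hdir' hlub)
  refine closure_minimal ?_ isClosed_Ici hmem
  rintro _ ⟨_, ⟨d, hd, rfl⟩, rfl⟩
  exact hD d hd _ inf_le_right

lemma exists_le_isPositiveFor (hadd : IsAdditive f) (hlub : ∀ D : Set B, ∃ s, IsLUB D s)
    (hcont : IsOrderContinuous f) {q : B} (hq : 0 < f q) :
    ∃ r ≤ q, 0 < f r ∧ IsPositiveFor f r := by
  set Z := {g | g ≤ q ∧ f g ≤ 0}
  have hchain : ∀ c ⊆ Z, IsChain (· ≤ ·) c → ∀ y ∈ c, ∃ ub ∈ Z, ∀ z ∈ c, z ≤ ub := by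
    intro c hcZ hc y hy
    obtain ⟨s, hs⟩ := hlub c
    have hmem := DirectedOn.mem_closure_image_of_tendsto ⟨y, hy⟩ hc.directedOn
      (hcont c s ⟨y, hy⟩ hc.directedOn hs)
    refine ⟨s, ⟨hs.2 fun z hz => (hcZ hz).1, closure_minimal ?_ isClosed_Iic hmem⟩,
      fun z hz => hs.1 hz⟩
    rintro _ ⟨z, hz, rfl⟩
    exact (hcZ hz).2
  -- `G` is maximal below `q` with nonpositive mass, so no part of `q \ G` has negative mass.
  obtain ⟨G, -, hG⟩ := zorn_le_nonempty₀ Z hchain ⊥ ⟨bot_le, hadd.map_bot.le⟩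
  obtain ⟨hGq, hGf⟩ := hG.prop
  have hqG : f q = f G + f (q \ G) := by
    rw [hadd.map_eq_map_inf_add_map_sdiff q G, inf_eq_right.2 hGq]
  refine ⟨q \ G, sdiff_le, by linarith, fun r hr => ?_⟩
  by_contra! hr0
  have hdisj : Disjoint G r := disjoint_sdiff_self_right.mono_right hr
  have hGr : G ⊔ r ∈ Z := ⟨sup_le hGq (hr.trans sdiff_le), by rw [hadd _ _ hdisj]; linarith⟩
  have hrG : r ≤ G := (hG.eq_of_le hGr le_sup_left).symm ▸ le_sup_right
  rw [hdisj.symm.eq_bot_of_le hrG, hadd.map_bot] at hr0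
  exact lt_irrefl 0 hr0

theorem exists_isPositiveFor_and_isPositiveFor_neg_compl (hadd : IsAdditive f)
    (hlub : ∀ D : Set B, ∃ s, IsLUB D s) (hcont : IsOrderContinuous f) :
    ∃ p : B, IsPositiveFor f p ∧ IsPositiveFor (-f) pᶜ := by
  obtain ⟨p, hp⟩ := hlub {q | IsPositiveFor f q}
  have hbot : IsPositiveFor f ⊥ := fun q hq => by
    rw [le_bot_iff.1 hq, hadd.map_bot]
  have hdir : DirectedOn (· ≤ ·) {q | IsPositiveFor f q} := fun a ha b hb =>
    ⟨a ⊔ b, IsPositiveFor.sup hadd ha hb, le_sup_left, le_sup_right⟩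
  have hpos : IsPositiveFor f p := IsPositiveFor.of_isLUB hcont ⟨⊥, hbot⟩ hdir (fun _ h => h) hp
  refine ⟨p, hpos, fun q hq => ?_⟩
  by_contra! hfq
  obtain ⟨r, hrq, hr, hrpos⟩ :=
    exists_le_isPositiveFor hadd hlub hcont (q := q) (by simp only [Pi.neg_apply] at hfq; linarith)
  have hdisj : Disjoint r p := (disjoint_compl_right.mono_right (hrq.trans hq)).symm
  rw [hdisj.eq_bot_of_le (hp.1 hrpos), hadd.map_bot] at hr
  exact lt_irrefl 0 hr

end HahnDecomposition

namespace TopologicalSpace.Clopens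

variable {K : Type*} [TopologicalSpace K]

noncomputable def charFn (U : Clopens K) : C(K, ℝ) := LocallyConstant.charFn ℝ U.isClopen

lemma charFn_apply (U : Clopens K) (y : K) : U.charFn y = (U : Set K).indicator 1 y := rfl

lemma charFn_inf (U V : Clopens K) : (U ⊓ V).charFn = U.charFn * V.charFn := by
  ext y
  by_cases hU : y ∈ U <;> by_cases hV : y ∈ V <;> simp [charFn_apply, hU, hV]

lemma charFn_mul_self (U : Clopens K) : U.charFn * U.charFn = U.charFn := by
  rw [← charFn_inf, inf_idem]

lemma charFn_sup {U V : Clopens K} (h : Disjoint U V) : (U ⊔ V).charFn = U.charFn + V.charFn := by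
  ext y
  have h' : y ∈ U → y ∉ V := fun hU hV => Set.disjoint_left.1 (coe_disjoint.2 h) hU hV
  by_cases hU : y ∈ U <;> by_cases hV : y ∈ V <;> simp_all [charFn_apply]

lemma charFn_compl (U : Clopens K) : Uᶜ.charFn = 1 - U.charFn := by
  ext y
  by_cases hU : y ∈ U <;> simp [charFn_apply, hU]

lemma charFn_nonneg (U : Clopens K) : 0 ≤ U.charFn := fun y => by
  by_cases hU : y ∈ U <;> simp [charFn_apply, hU]

lemma charFn_le_one (U : Clopens K) : U.charFn ≤ 1 := fun y => by
  by_cases hU : y ∈ U <;> simp [charFn_apply, hU]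

lemma charFn_mono : Monotone (charFn : Clopens K → C(K, ℝ)) := fun U V h y => by
  by_cases hU : y ∈ U
  · simp [charFn_apply, hU, h hU]
  · simpa [charFn_apply, hU] using V.charFn_nonneg y

variable [ExtremallyDisconnected K]

def closureSUnion (D : Set (Clopens K)) : Clopens K :=
  ⟨closure (⋃ d ∈ D, (d : Set K)), isClosed_closure,
    ExtremallyDisconnected.open_closure _ (isOpen_biUnion fun d _ => d.isOpen)⟩

lemma isLUB_closureSUnion (D : Set (Clopens K)) : IsLUB D (closureSUnion D) :=
  ⟨fun _ hd => (subset_biUnion_of_mem (u := fun d : Clopens K => (d : Set K)) hd).trans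
      subset_closure,
    fun u hu => closure_minimal (iUnion₂_subset fun _ hd => hu hd) u.isClosed⟩

lemma exists_isLUB (D : Set (Clopens K)) : ∃ s, IsLUB D s := ⟨_, isLUB_closureSUnion D⟩

lemma isLUB_image_charFn {D : Set (Clopens K)} (hne : D.Nonempty) {s : Clopens K}
    (hs : IsLUB D s) : IsLUB (charFn '' D) s.charFn := by
  refine ⟨charFn_mono.mem_upperBounds_image hs.1, fun g hg => ?_⟩
  obtain ⟨d₀, hd₀⟩ := hne
  have hg0 : 0 ≤ g := d₀.charFn_nonneg.trans (hg ⟨d₀, hd₀, rfl⟩)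
  have hs_sub : (s : Set K) ⊆ {y | 1 ≤ g y} := by
    rw [hs.unique (isLUB_closureSUnion D)]
    refine closure_minimal (iUnion₂_subset fun d hd y hy => ?_)
      (isClosed_le continuous_const g.continuous)
    simpa [charFn_apply, hy] using hg ⟨d, hd, rfl⟩ y
  intro y
  by_cases hy : y ∈ s
  · simpa [charFn_apply, hy] using hs_sub hy
  · simpa [charFn_apply, hy] using hg0 y

end TopologicalSpace.Clopens

open TopologicalSpace.Clopens

lemma BadeComplete.tendsto_charFn {K X : Type*} [TopologicalSpace K] [CompactSpace K] [T2Space K]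
    [ExtremallyDisconnected K] [NormedAddCommGroup X] [NormedSpace ℝ X] [CompleteSpace X]
    {m : C(K, ℝ) →ₐ[ℝ] (X →L[ℝ] X)} (hB : BadeComplete m) {D : Set (Clopens K)}
    (hne : D.Nonempty) (hdir : DirectedOn (· ≤ ·) D) {s : Clopens K} (hs : IsLUB D s) (x : X) :
    Tendsto (fun d : D => m (d : Clopens K).charFn x) atTop (𝓝 (m s.charFn x)) := by
  have hS := hB (charFn '' D) (by rintro _ ⟨d, -, rfl⟩; exact d.charFn_mul_self) (hne.image _)
    (hdir.mono_comp fun _ _ h => charFn_mono h) s.charFn s.charFn_mul_self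
    (isLUB_image_charFn hne hs) x
  have hreindex : Tendsto (fun d : D => (⟨(d : Clopens K).charFn, mem_image_of_mem _ d.2⟩ :
      charFn '' D)) atTop atTop :=
    Monotone.tendsto_atTop_atTop (fun _ _ h => charFn_mono h)
      (by rintro ⟨_, d, hd, rfl⟩; exact ⟨⟨d, hd⟩, le_rfl⟩)
  exact hS.comp hreindex

section Positivity

variable {K : Type*} [TopologicalSpace K] [CompactSpace K]

lemma LinearMap.apply_locallyConstant_nonneg (φ : C(K, ℝ) →ₗ[ℝ] ℝ)
    (hφ : ∀ U : Clopens K, 0 ≤ φ U.charFn) (g : LocallyConstant K ℝ) (hg : ∀ y, 0 ≤ g y) :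
    0 ≤ φ g := by
  classical
  set F := g.range_finite.toFinset
  have hg_eq : (g : C(K, ℝ)) =
      ∑ c ∈ F, c • (⟨{z | g z = c}, g.isLocallyConstant.isClopen_fiber c⟩ : Clopens K).charFn := by
    ext y
    simp [charFn_apply, Set.indicator_apply, F]
  rw [hg_eq, map_sum]
  refine Finset.sum_nonneg fun c hc => ?_
  obtain ⟨y, rfl⟩ := (Set.Finite.mem_toFinset _).1 hc
  rw [map_smul, smul_eq_mul]
  exact mul_nonneg (hg y) (hφ _)

variable [TotallySeparatedSpace K]

lemma ContinuousLinearMap.apply_nonneg_of_forall_charFn (φ : C(K, ℝ) →L[ℝ] ℝ)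
    (hφ : ∀ U : Clopens K, 0 ≤ φ U.charFn) {a : C(K, ℝ)} (ha : 0 ≤ a) : 0 ≤ φ a := by
  have hclosure :
      a ∈ closure {b : C(K, ℝ) | ∃ g : LocallyConstant K ℝ, (∀ y, 0 ≤ g y) ∧ b = g} := by
    rw [Metric.mem_closure_iff]
    intro ε hε
    obtain ⟨⟨_, g, rfl⟩, hg⟩ :=
      ContinuousMap.exists_mem_subalgebra_near_continuousMap_of_separatesPoints _
        (LocallyConstant.separatesPoints_range_toContinuousMapAlgHom ℝ) a ε hε
    refine ⟨g.map (max · 0), ⟨_, fun y => le_max_right _ _, rfl⟩, ?_⟩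
    calc dist a (g.map (max · 0)) ≤ dist a (g : C(K, ℝ)) := by
          refine (ContinuousMap.dist_le dist_nonneg).2 fun y => ?_
          have hay : 0 ≤ a y := ha y
          calc dist (a y) (max (g y) 0) = |max (a y) 0 - max (g y) 0| := by
                rw [max_eq_left hay, Real.dist_eq]
            _ ≤ |a y - g y| := abs_max_sub_max_le_abs _ _ _
            _ ≤ dist a (g : C(K, ℝ)) := by
                rw [← Real.dist_eq]
                exact ContinuousMap.dist_apply_le_dist (f := a) (g := (g : C(K, ℝ))) y
      _ = ‖(g : C(K, ℝ)) - a‖ := by rw [dist_comm, dist_eq_norm]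
      _ < ε := hg
  refine closure_minimal ?_ (isClosed_le continuous_const φ.continuous) hclosure
  rintro _ ⟨g, hg, rfl⟩
  exact LinearMap.apply_locallyConstant_nonneg φ hφ g hg

lemma ContinuousLinearMap.apply_mul_charFn_nonneg (φ : C(K, ℝ) →L[ℝ] ℝ) {P : Clopens K}
    (hP : IsPositiveFor (fun U => φ U.charFn) P) {a : C(K, ℝ)} (ha : 0 ≤ a) :
    0 ≤ φ (a * P.charFn) :=
  (φ.comp ((ContinuousLinearMap.mul ℝ C(K, ℝ)).flip P.charFn)).apply_nonneg_of_forall_charFn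
    (fun U => by simpa [charFn_inf] using hP (P ⊓ U) inf_le_left) ha

end Positivity

lemma isGreatest_map_Icc_zero {A : Type*} [CommRing A] [PartialOrder A] [IsOrderedRing A]
    (φ : A →+ ℝ) {e : A} (he0 : 0 ≤ e) (he1 : e ≤ 1)
    (hpos : ∀ a, 0 ≤ a → 0 ≤ φ (a * e)) (hneg : ∀ a, 0 ≤ a → φ (a * (1 - e)) ≤ 0)
    {a : A} (ha : 0 ≤ a) :
    IsGreatest {r | ∃ b, 0 ≤ b ∧ b ≤ a ∧ r = φ b} (φ (a * e)) := by
  refine ⟨⟨a * e, mul_nonneg ha he0, mul_le_of_le_one_right ha he1, rfl⟩, ?_⟩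
  rintro _ ⟨b, hb0, hba, rfl⟩
  have hb : φ b = φ (b * e) + φ (b * (1 - e)) := by rw [← map_add]; ring_nf
  have ha : φ (a * e) = φ (b * e) + φ ((a - b) * e) := by rw [← map_add]; ring_nf
  linarith [hneg b hb0, hpos (a - b) (sub_nonneg.2 hba)]

/-- Jordan decomposition of `μ(a) = x'(m a x)` by an idempotent: there is an idempotent
`e₊` such that `a ↦ x'(m (a e₊) x)` and `a ↦ -x'(m (a(1-e₊)) x)` are positive, and the
first realizes the positive part `μ⁺` of `μ`. -/
theorem stmt15 {K X : Type*} [TopologicalSpace K] [CompactSpace K] [T2Space K]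
    [ExtremallyDisconnected K]
    [NormedAddCommGroup X] [NormedSpace ℝ X] [CompleteSpace X]
    (m : C(K, ℝ) →ₐ[ℝ] (X →L[ℝ] X))
    (hm : ∀ a : C(K, ℝ), ‖m a‖ = ‖a‖)
    (hBade : BadeComplete m)
    (x : X) (x' : X →L[ℝ] ℝ) :
    ∃ e : C(K, ℝ), e * e = e ∧
      (∀ a : C(K, ℝ), 0 ≤ a → 0 ≤ x' (m (a * e) x)) ∧
      (∀ a : C(K, ℝ), 0 ≤ a → x' (m (a * (1 - e)) x) ≤ 0) ∧
      (∀ a : C(K, ℝ), 0 ≤ a →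
        x' (m (a * e) x) =
          sSup {r : ℝ | ∃ b : C(K, ℝ), 0 ≤ b ∧ b ≤ a ∧ r = x' (m b x)}) := by
  let φ : C(K, ℝ) →L[ℝ] ℝ := x'.comp ((ContinuousLinearMap.apply ℝ X x).comp
    (m.toLinearMap.mkContinuous 1 fun a => by simp [hm]))
  obtain ⟨P, hP, hPc⟩ := exists_isPositiveFor_and_isPositiveFor_neg_compl
    (f := fun U : Clopens K => φ U.charFn) (fun U V h => by simp [charFn_sup h])
    exists_isLUB fun D s hne hdir hs =>
      (x'.continuous.tendsto _).comp (hBade.tendsto_charFn hne hdir hs x)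
  have hpos : ∀ a : C(K, ℝ), 0 ≤ a → 0 ≤ φ (a * P.charFn) := fun a ha =>
    φ.apply_mul_charFn_nonneg hP ha
  have hneg : ∀ a : C(K, ℝ), 0 ≤ a → φ (a * (1 - P.charFn)) ≤ 0 := fun a ha => by
    simpa [← charFn_compl] using (-φ).apply_mul_charFn_nonneg hPc ha
  refine ⟨P.charFn, P.charFn_mul_self, hpos, hneg, fun a ha => ?_⟩
  exact (isGreatest_map_Icc_zero (φ : C(K, ℝ) →+ ℝ) P.charFn_nonneg P.charFn_le_one
    hpos hneg ha).csSup_eq.symm
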